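/- Let φ ∈ L¹(ℝ^d) ∩ L^α(ℝ^d) with α ∈ (1,2] and d < β < αd, and let μ(dx) = φ(x)dx. Then there exists a constant C_μ > 0 such that ∫_{ℝ^d} |μ(B(x,r))|^α dx ≤ C_μ (r^d ∧ r^{αd}) for all r > 0; in particular μ ∈ M_{α,β}. -/

import Mathlib

/-!
With `G x = ∫_{B(x,r)} |φ|`, Fubini and translation invariance give
`∫ G = |B_r| ‖φ‖₁` and `∫ ∫_{B(x,r)} |φ|^α dx = |B_r| ‖φ‖_α^α`. For large `r` use
`G^α ≤ ‖φ‖₁^(α-1) G`; for small `r` use Hölder on the ball, `G^α ≤ |B_r|^(α-1) ∫_{B(x,r)} |φ|^α`.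
Since `|B_r| = c r^d`, these give the bounds `r^d` and `r^(αd)`.
-/

open MeasureTheory ENNReal Metric

theorem rpow_lintegral_le_measure_univ_rpow_mul_lintegral_rpow {X : Type*} [MeasurableSpace X]
    {ν : Measure X} {p : ℝ} (hp : 1 < p) {f : X → ℝ≥0∞} (hf : AEMeasurable f ν) :
    (∫⁻ x, f x ∂ν) ^ p ≤ ν Set.univ ^ (p - 1) * ∫⁻ x, f x ^ p ∂ν := by
  have hpq : p.HolderConjugate p.conjExponent := .conjExponent hp
  have holder := ENNReal.lintegral_mul_le_Lp_mul_Lq ν hpq hf aemeasurable_const (g := 1)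
  simp only [Pi.mul_apply, Pi.one_apply, mul_one, ENNReal.one_rpow, lintegral_const,
    one_mul] at holder
  calc (∫⁻ x, f x ∂ν) ^ p
      ≤ ((∫⁻ x, f x ^ p ∂ν) ^ (1 / p) * ν Set.univ ^ (1 / p.conjExponent)) ^ p := by gcongr
    _ = ν Set.univ ^ (p - 1) * ∫⁻ x, f x ^ p ∂ν := by
      rw [ENNReal.mul_rpow_of_nonneg _ _ (by linarith), ← ENNReal.rpow_mul, ← ENNReal.rpow_mul,
        one_div_mul_cancel (by linarith), ENNReal.rpow_one, mul_comm, Real.conjExponent,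
        one_div_div, div_mul_cancel₀ _ (by linarith)]

theorem integral_le_of_lintegral_enorm_le {X : Type*} [MeasurableSpace X] {ν : Measure X}
    {f : X → ℝ} {b : ℝ} (hb : 0 ≤ b) (h : ∫⁻ x, ‖f x‖ₑ ∂ν ≤ ENNReal.ofReal b) :
    ∫ x, f x ∂ν ≤ b := by
  have := (enorm_integral_le_lintegral_enorm f).trans h
  rw [Real.enorm_eq_ofReal_abs, ENNReal.ofReal_le_ofReal_iff hb] at this
  exact (le_abs_self _).trans this

theorem enorm_abs_integral_rpow_le {X : Type*} [MeasurableSpace X] {ν : Measure X}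
    (f : X → ℝ) {p : ℝ} (hp : 0 ≤ p) :
    ‖|∫ x, f x ∂ν| ^ p‖ₑ ≤ (∫⁻ x, ‖f x‖ₑ ∂ν) ^ p := by
  rw [Real.enorm_rpow_of_nonneg (abs_nonneg _) hp, Real.enorm_abs]
  gcongr
  exact enorm_integral_le_lintegral_enorm f

theorem ENNReal.rpow_sub_one_mul_self {p : ℝ} (hp : 1 ≤ p) (a : ℝ≥0∞) :
    a ^ (p - 1) * a = a ^ p := by
  conv_rhs => rw [← sub_add_cancel p 1]
  rw [ENNReal.rpow_add_of_nonneg _ _ (by linarith) zero_le_one, ENNReal.rpow_one]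

section BallAverages

variable {E : Type*} [NormedAddCommGroup E] [MeasurableSpace E] [BorelSpace E]
  {μ : Measure E} {g : E → ℝ≥0∞}

theorem setLIntegral_closedBall_eq_lintegral_indicator (r : ℝ) (x : E) :
    ∫⁻ y in closedBall x r, g y ∂μ
      = ∫⁻ y, {p : E × E | dist p.2 p.1 ≤ r}.indicator (fun p => g p.2) (x, y) ∂μ := by
  rw [← lintegral_indicator measurableSet_closedBall]
  rfl

theorem measure_closedBall_center [μ.IsAddLeftInvariant] (x : E) (r : ℝ) :
    μ (closedBall x r) = μ (closedBall 0 r) := by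
  rw [← measure_preimage_add μ x, preimage_add_closedBall, sub_self]

variable [SecondCountableTopology E]

theorem aemeasurable_indicator_dist_le (hg : AEMeasurable g μ) (r : ℝ) :
    AEMeasurable ({p : E × E | dist p.2 p.1 ≤ r}.indicator fun p => g p.2) (μ.prod μ) :=
  hg.comp_snd.indicator (measurableSet_le (by fun_prop) measurable_const)

variable [SFinite μ]

theorem AEMeasurable.setLIntegral_closedBall (hg : AEMeasurable g μ) (r : ℝ) :
    AEMeasurable (fun x => ∫⁻ y in closedBall x r, g y ∂μ) μ := by
  simp_rw [setLIntegral_closedBall_eq_lintegral_indicator]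
  exact (aemeasurable_indicator_dist_le hg r).lintegral_prod_right'

theorem lintegral_setLIntegral_closedBall [μ.IsAddLeftInvariant] (hg : AEMeasurable g μ)
    (r : ℝ) :
    ∫⁻ x, ∫⁻ y in closedBall x r, g y ∂μ ∂μ = μ (closedBall 0 r) * ∫⁻ y, g y ∂μ := by
  simp_rw [setLIntegral_closedBall_eq_lintegral_indicator]
  rw [lintegral_lintegral_swap (by exact aemeasurable_indicator_dist_le hg r), mul_comm,
    ← lintegral_mul_const'' _ hg]
  refine lintegral_congr fun y => ?_
  rw [← measure_closedBall_center y, ← lintegral_indicator_const measurableSet_closedBall]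
  refine lintegral_congr fun x => ?_
  simp only [Set.indicator, Set.mem_ofPred_eq, mem_closedBall, dist_comm y x]

theorem lintegral_rpow_setLIntegral_closedBall_le_mul_rpow_lintegral [μ.IsAddLeftInvariant]
    (hg : AEMeasurable g μ) {p : ℝ} (hp : 1 ≤ p) (r : ℝ) :
    ∫⁻ x, (∫⁻ y in closedBall x r, g y ∂μ) ^ p ∂μ
      ≤ μ (closedBall 0 r) * (∫⁻ y, g y ∂μ) ^ p := by
  set I := ∫⁻ y, g y ∂μ
  calc ∫⁻ x, (∫⁻ y in closedBall x r, g y ∂μ) ^ p ∂μ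
      ≤ ∫⁻ x, I ^ (p - 1) * ∫⁻ y in closedBall x r, g y ∂μ ∂μ := by
        refine lintegral_mono fun x => ?_
        rw [← ENNReal.rpow_sub_one_mul_self hp]
        gcongr
        exact setLIntegral_le_lintegral _ _
    _ = μ (closedBall 0 r) * I ^ p := by
        rw [lintegral_const_mul'' _ (hg.setLIntegral_closedBall r),
          lintegral_setLIntegral_closedBall hg,
          ← ENNReal.rpow_sub_one_mul_self hp]
        ring

theorem lintegral_rpow_setLIntegral_closedBall_le_rpow_mul_lintegral_rpow
    [μ.IsAddLeftInvariant] (hg : AEMeasurable g μ) {p : ℝ} (hp : 1 < p) (r : ℝ) :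
    ∫⁻ x, (∫⁻ y in closedBall x r, g y ∂μ) ^ p ∂μ
      ≤ μ (closedBall 0 r) ^ p * ∫⁻ y, g y ^ p ∂μ := by
  set V := μ (closedBall 0 r)
  calc ∫⁻ x, (∫⁻ y in closedBall x r, g y ∂μ) ^ p ∂μ
      ≤ ∫⁻ x, V ^ (p - 1) * ∫⁻ y in closedBall x r, g y ^ p ∂μ ∂μ := by
        refine lintegral_mono fun x => ?_
        have := rpow_lintegral_le_measure_univ_rpow_mul_lintegral_rpow hp hg.restrict
          (ν := μ.restrict (closedBall x r))
        rwa [Measure.restrict_apply_univ, measure_closedBall_center] at this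
    _ = V ^ p * ∫⁻ y, g y ^ p ∂μ := by
        rw [lintegral_const_mul'' _ ((hg.pow_const p).setLIntegral_closedBall r),
          lintegral_setLIntegral_closedBall (hg.pow_const p), ← mul_assoc,
          ENNReal.rpow_sub_one_mul_self hp.le]

end BallAverages

section FiniteDimensional

variable {E : Type*} [NormedAddCommGroup E] [NormedSpace ℝ E] [FiniteDimensional ℝ E]
  [MeasurableSpace E] [BorelSpace E] {μ : Measure E} [μ.IsAddHaarMeasure] {g : E → ℝ≥0∞}

theorem lintegral_rpow_setLIntegral_closedBall_le_mul_min (hg : AEMeasurable g μ) {p : ℝ}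
    (hp : 1 < p) {r : ℝ} (hr : 0 ≤ r) :
    ∫⁻ x, (∫⁻ y in closedBall x r, g y ∂μ) ^ p ∂μ
      ≤ max (μ (ball 0 1) * (∫⁻ y, g y ∂μ) ^ p) (μ (ball 0 1) ^ p * ∫⁻ y, g y ^ p ∂μ)
        * ENNReal.ofReal (min (r ^ (Module.finrank ℝ E : ℝ)) (r ^ (p * Module.finrank ℝ E))) := by
  set n : ℝ := (Module.finrank ℝ E : ℝ)
  have hvol : μ (closedBall 0 r) = ENNReal.ofReal (r ^ n) * μ (ball 0 1) := by
    rw [Measure.addHaar_closedBall _ _ hr, ← Real.rpow_natCast]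
  rcases min_cases (r ^ n) (r ^ (p * n)) with ⟨hmin, -⟩ | ⟨hmin, -⟩ <;> rw [hmin]
  · calc _ ≤ _ := lintegral_rpow_setLIntegral_closedBall_le_mul_rpow_lintegral hg hp.le r
      _ ≤ _ := by rw [hvol, mul_assoc, mul_comm]; gcongr; exact le_max_left _ _
  · calc _ ≤ _ := lintegral_rpow_setLIntegral_closedBall_le_rpow_mul_lintegral_rpow hg hp r
      _ = ENNReal.ofReal (r ^ (p * n)) * (μ (ball 0 1) ^ p * ∫⁻ y, g y ^ p ∂μ) := by
        rw [hvol, mul_rpow_of_nonneg _ _ (by linarith),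
          ofReal_rpow_of_nonneg (by positivity) (by linarith), ← Real.rpow_mul hr, mul_comm n]
        ring
      _ ≤ _ := by rw [mul_comm]; gcongr; exact le_max_right _ _

end FiniteDimensional

theorem L1_Lalpha_in_Mab_general (d : ℕ) (α : ℝ)
    (hα : 1 < α)
    (φ : EuclideanSpace ℝ (Fin d) → ℝ)
    (hφ1 : Integrable φ)
    (hφα : MemLp φ (ENNReal.ofReal α)) :
    ∃ C > (0 : ℝ), ∀ r > (0 : ℝ),
      ∫ x : EuclideanSpace ℝ (Fin d), |∫ y in Metric.closedBall x r, φ y| ^ α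
        ≤ C * min (r ^ (d : ℝ)) (r ^ (α * d)) := by
  set g := fun y => ‖φ y‖ₑ
  have hIα : ∫⁻ y, g y ^ α ≠ ⊤ := by
    simpa [ENNReal.toReal_ofReal (by linarith : 0 ≤ α)] using
      (lintegral_rpow_enorm_lt_top_of_eLpNorm_lt_top (by simp; linarith) ofReal_ne_top hφα.2).ne
  set c := volume (ball (0 : EuclideanSpace ℝ (Fin d)) 1)
  have hc : c ≠ ⊤ := measure_ball_lt_top.ne
  set K := max (c * (∫⁻ y, g y) ^ α) (c ^ α * ∫⁻ y, g y ^ α)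
  have hK : K ≠ ⊤ := max_ne_top (mul_ne_top hc (rpow_ne_top_of_nonneg (by linarith) hφ1.2.ne))
    (mul_ne_top (rpow_ne_top_of_nonneg (by linarith) hc) hIα)
  refine ⟨K.toReal + 1, by positivity, fun r hr =>
    integral_le_of_lintegral_enorm_le (by positivity) ?_⟩
  calc ∫⁻ x, ‖|∫ y in closedBall x r, φ y| ^ α‖ₑ
      ≤ ∫⁻ x, (∫⁻ y in closedBall x r, g y) ^ α :=
        lintegral_mono fun x => enorm_abs_integral_rpow_le φ (by linarith)
    _ ≤ K * ENNReal.ofReal (min (r ^ (d : ℝ)) (r ^ (α * d))) := by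
        simpa only [finrank_euclideanSpace_fin] using
          lintegral_rpow_setLIntegral_closedBall_le_mul_min hφ1.aemeasurable.enorm hα hr.le
    _ ≤ ENNReal.ofReal ((K.toReal + 1) * min (r ^ (d : ℝ)) (r ^ (α * d))) := by
        rw [ENNReal.ofReal_mul (by positivity)]
        gcongr
        exact (ENNReal.le_ofReal_iff_toReal_le hK (by positivity)).mpr (by linarith)

theorem L1_Lalpha_in_Mab (d : ℕ) (hd : 1 ≤ d) (α β : ℝ)
    (hα : 1 < α) (hα2 : α ≤ 2) (hβ1 : (d : ℝ) < β) (hβ2 : β < α * d)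
    (φ : EuclideanSpace ℝ (Fin d) → ℝ)
    (hφ1 : Integrable φ)
    (hφα : MemLp φ (ENNReal.ofReal α)) :
    ∃ C > (0 : ℝ), ∀ r > (0 : ℝ),
      ∫ x : EuclideanSpace ℝ (Fin d), |∫ y in Metric.closedBall x r, φ y| ^ α
        ≤ C * min (r ^ (d : ℝ)) (r ^ (α * d)) :=
  L1_Lalpha_in_Mab_general d α hα φ hφ1 hφα
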